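/- Suppose cf(γ) > max(ℵ₀, |R|). Then in the tree-based inverse γ-system of free R-modules, the elements x^t for γ-branches t generate Gr(A) modulo Fact(A); combined with their independence over Fact(A), the quotient module Gr(A)/Fact(A) is isomorphic to the submodule generated by {x^t : t a γ-branch}, so |Gr(A)/Fact(A)| equals the cardinality of that submodule. -/

import Mathlib

namespace Paper644

/-- `S` is a bounded subset of `γ`. -/
def bddIn (γ : Ordinal) (S : Set Ordinal) : Prop := ∃ β < γ, ∀ x ∈ S, x < β

/-- `S` is an unbounded subset of `γ`. -/
def unbddIn (γ : Ordinal) (S : Set Ordinal) : Prop := ∀ β < γ, ∃ x ∈ S, β ≤ x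

/-- `Ind γ = {(i,j) : i < j < γ}`. -/
def Ind (γ : Ordinal) : Set (Ordinal × Ordinal) := {p | p.1 < p.2 ∧ p.2 < γ}

/-- `dom I = {i : ∃ j, (i,j) ∈ I}`. -/
def dom (I : Set (Ordinal × Ordinal)) : Set Ordinal := {i | ∃ j, (i, j) ∈ I}

/-- The fiber `I_i = {j : (i,j) ∈ I}`. -/
def fib (I : Set (Ordinal × Ordinal)) (i : Ordinal) : Set Ordinal := {j | (i, j) ∈ I}

/-- `I` is eventually coherent: `dom I` is unbounded in `γ` and for every `i ∈ dom I`,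
`dom I \ I_i` is a bounded subset of `γ`. -/
def EvCoh (γ : Ordinal) (I : Set (Ordinal × Ordinal)) : Prop :=
  unbddIn γ (dom I) ∧ ∀ i ∈ dom I, bddIn γ (dom I \ fib I i)

open Finsupp

variable (R : Type) [Ring R] (T : Ordinal → Type)

/-- `G_i`, the free `R`-module with generators indexed by `T i × Ordinal`
(only generators `x_{ν,l}` with `i < l < γ` are actually used). -/
abbrev GMod (i : Ordinal) : Type _ := (T i × Ordinal) →₀ R

/-- Coherence of the tree restriction maps: `res i j ∘ res j k = res i k`. -/
def resCoh (res : ∀ i j, i < j → T j → T i) : Prop :=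
  ∀ i j k (hij : i < j) (hjk : j < k) (x : T k),
    res i j hij (res j k hjk x) = res i k (hij.trans hjk) x

/-- `T` is a tree of height `γ`: all levels below `γ` are nonempty. -/
def treeHeight (γ : Ordinal) : Prop := ∀ i < γ, Nonempty (T i)

/-- The homomorphisms `h i j` are determined on generators by
`h i j (x_{η,l}) = x_{η↾i,l} - x_{η↾i,j}`. -/
def hdef (res : ∀ i j, i < j → T j → T i)
    (h : ∀ i j, i < j → GMod R T j →ₗ[R] GMod R T i) : Prop :=
  ∀ i j (hij : i < j) (η : T j) (l : Ordinal),
    h i j hij (Finsupp.single (η, l) (1 : R)) =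
      Finsupp.single (res i j hij η, l) (1 : R) -
        Finsupp.single (res i j hij η, j) (1 : R)

/-- `Gr(A)`: sequences `⟨a_{i,j}⟩_{i<j<γ}` with `a_{i,j} ∈ G_i` (support in indices
`i < l < γ`) and `a_{i,k} = a_{i,j} + h_{i,j}(a_{j,k})` for `i < j < k < γ`.
(Coordinates outside `i < j < γ` are required to be `0`.) -/
def Gr (γ : Ordinal) (h : ∀ i j, i < j → GMod R T j →ₗ[R] GMod R T i) :
    Set (∀ i, Ordinal → GMod R T i) :=
  {a | (∀ i j, ¬(i < j ∧ j < γ) → a i j = 0) ∧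
       (∀ i j, i < j → j < γ → ∀ p ∈ (a i j).support, i < p.2 ∧ p.2 < γ) ∧
       (∀ i j k (hij : i < j) (hjk : j < k), k < γ →
          a i k = a i j + h i j hij (a j k))}

/-- `Fact(A)`: sequences of the form `⟨y_i - h_{i,j}(y_j)⟩_{i<j<γ}` for some
`y ∈ ∏_{k<γ} G_k`. (Coordinates outside `i < j < γ` are required to be `0`.) -/
def Fact (γ : Ordinal) (h : ∀ i j, i < j → GMod R T j →ₗ[R] GMod R T i) :
    Set (∀ i, Ordinal → GMod R T i) :=
  {a | (∀ i j, ¬(i < j ∧ j < γ) → a i j = 0) ∧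
       ∃ y : ∀ i, GMod R T i,
         (∀ i, i < γ → ∀ p ∈ (y i).support, i < p.2 ∧ p.2 < γ) ∧
         ∀ i j (hij : i < j), j < γ → a i j = y i - h i j hij (y j)}

/-- `t` is a `γ`-branch of `T`. -/
def IsBranch (γ : Ordinal) (res : ∀ i j, i < j → T j → T i)
    (t : ∀ i, i < γ → T i) : Prop :=
  ∀ i j (hij : i < j) (hj : j < γ), res i j hij (t j hj) = t i (hij.trans hj)

/-- The element `x^t = ⟨x_{t(i),j}⟩_{i<j<γ}` associated to a `γ`-branch `t`. -/
noncomputable def branchElt (γ : Ordinal) (t : ∀ i, i < γ → T i) :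
    ∀ i, Ordinal → GMod R T i :=
  fun i j => if h : i < γ ∧ i < j ∧ j < γ
    then Finsupp.single (t i h.1, j) (1 : R) else 0

/-- The set `{x^t : t a γ-branch of T}`. -/
def BrSet (γ : Ordinal) (res : ∀ i j, i < j → T j → T i) :
    Set (∀ i, Ordinal → GMod R T i) :=
  {a | ∃ t : ∀ i, i < γ → T i, IsBranch T γ res t ∧ a = branchElt R T γ t}

section AuxGeneral

theorem mapDomain_apply_eq_sum {α β M : Type*} [AddCommMonoid M] [DecidableEq β]
    (f : α → β) (z : α →₀ M) (q : β) :
    Finsupp.mapDomain f z q = ∑ p ∈ z.support, if f p = q then z p else 0 := by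
  rw [Finsupp.mapDomain, Finsupp.sum_apply]
  exact Finset.sum_congr rfl fun p _ => Finsupp.single_apply

theorem mapDomain_congr_fiber {α β M : Type*} [AddCommMonoid M] (f : α → β) (z z' : α →₀ M)
    (q : β) (hagree : ∀ p, f p = q → z p = z' p) :
    Finsupp.mapDomain f z q = Finsupp.mapDomain f z' q := by
  classical
  rw [mapDomain_apply_eq_sum, mapDomain_apply_eq_sum]
  have h1 : ∑ p ∈ z.support, (if f p = q then z p else 0) =
      ∑ p ∈ z.support ∪ z'.support, (if f p = q then z p else 0) := by
    refine Finset.sum_subset Finset.subset_union_left fun p _ hp => ?_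
    split_ifs
    · exact Finsupp.notMem_support_iff.1 hp
    · rfl
  have h2 : ∑ p ∈ z'.support, (if f p = q then z' p else 0) =
      ∑ p ∈ z.support ∪ z'.support, (if f p = q then z' p else 0) := by
    refine Finset.sum_subset Finset.subset_union_right fun p _ hp => ?_
    split_ifs
    · exact Finsupp.notMem_support_iff.1 hp
    · rfl
  rw [h1, h2]
  refine Finset.sum_congr rfl fun p _ => ?_
  split_ifs with hf
  · exact hagree p hf
  · rfl

theorem mapDomain_apply_zero {α β M : Type*} [AddCommMonoid M] (f : α → β) (z : α →₀ M) (q : β)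
    (hq : ∀ p ∈ z.support, f p ≠ q) :
    Finsupp.mapDomain f z q = 0 := by
  classical
  rw [mapDomain_apply_eq_sum]
  exact Finset.sum_eq_zero fun p hp => if_neg (hq p hp)

end AuxGeneral
section AuxH

variable {R} {T} {res : ∀ i j, i < j → T j → T i}
variable {h : ∀ i j, i < j → GMod R T j →ₗ[R] GMod R T i}

theorem h_eq (hh : hdef R T res h) {i j : Ordinal} (hij : i < j) (z : GMod R T j) :
    h i j hij z = Finsupp.mapDomain (fun p : T j × Ordinal => (res i j hij p.1, p.2)) z
      - Finsupp.mapDomain (fun p : T j × Ordinal => (res i j hij p.1, j)) z := by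
  have key : h i j hij =
      (Finsupp.lmapDomain R R (fun p : T j × Ordinal => (res i j hij p.1, p.2)))
      - (Finsupp.lmapDomain R R (fun p : T j × Ordinal => (res i j hij p.1, j))) := by
    apply Finsupp.lhom_ext
    rintro ⟨η, l⟩ b
    have hb : (Finsupp.single (η, l) b : GMod R T j) = b • Finsupp.single (η, l) (1 : R) := by
      rw [Finsupp.smul_single, smul_eq_mul, mul_one]
    rw [hb, map_smul, map_smul, hh i j hij η l]
    simp only [LinearMap.sub_apply, Finsupp.lmapDomain_apply, Finsupp.mapDomain_single,
      smul_sub, Finsupp.smul_single, smul_eq_mul, mul_one]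
  rw [key]
  simp only [LinearMap.sub_apply, Finsupp.lmapDomain_apply]

theorem h_comp (hres : resCoh T res) (hh : hdef R T res h) {i j k : Ordinal}
    (hij : i < j) (hjk : j < k) (z : GMod R T k) :
    h i j hij (h j k hjk z) = h i k (hij.trans hjk) z := by
  rw [h_eq hh hjk z, map_sub, h_eq hh hij, h_eq hh hij, h_eq hh (hij.trans hjk)]
  rw [← Finsupp.mapDomain_comp, ← Finsupp.mapDomain_comp, ← Finsupp.mapDomain_comp,
    ← Finsupp.mapDomain_comp]
  have e1 : ((fun p : T j × Ordinal => (res i j hij p.1, p.2)) ∘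
      (fun p : T k × Ordinal => (res j k hjk p.1, p.2))) =
      fun p : T k × Ordinal => (res i k (hij.trans hjk) p.1, p.2) :=
    funext fun p => by simp [Function.comp, hres i j k hij hjk]
  have e2 : ((fun p : T j × Ordinal => (res i j hij p.1, j)) ∘
      (fun p : T k × Ordinal => (res j k hjk p.1, p.2))) =
      fun p : T k × Ordinal => (res i k (hij.trans hjk) p.1, j) :=
    funext fun p => by simp [Function.comp, hres i j k hij hjk]
  have e3 : ((fun p : T j × Ordinal => (res i j hij p.1, p.2)) ∘
      (fun p : T k × Ordinal => (res j k hjk p.1, k))) =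
      fun p : T k × Ordinal => (res i k (hij.trans hjk) p.1, k) :=
    funext fun p => by simp [Function.comp, hres i j k hij hjk]
  have e4 : ((fun p : T j × Ordinal => (res i j hij p.1, j)) ∘
      (fun p : T k × Ordinal => (res j k hjk p.1, k))) =
      fun p : T k × Ordinal => (res i k (hij.trans hjk) p.1, j) :=
    funext fun p => by simp [Function.comp, hres i j k hij hjk]
  rw [e1, e2, e3, e4]
  abel

end AuxH
section AuxSub

variable {R} {T} {res : ∀ i j, i < j → T j → T i}
variable {h : ∀ i j, i < j → GMod R T j →ₗ[R] GMod R T i} {γ : Ordinal}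

theorem Gr_zero : (0 : ∀ i, Ordinal → GMod R T i) ∈ Gr R T γ h := by
  refine ⟨fun i j _ => rfl, fun i j _ _ p hp => absurd hp (by simp), fun i j k hij hjk hk => ?_⟩
  simp

theorem Gr_add {a b : ∀ i, Ordinal → GMod R T i} (ha : a ∈ Gr R T γ h) (hb : b ∈ Gr R T γ h) :
    a + b ∈ Gr R T γ h := by
  classical
  refine ⟨fun i j hn => ?_, fun i j hij hj p hp => ?_, fun i j k hij hjk hk => ?_⟩
  · show a i j + b i j = 0
    rw [ha.1 i j hn, hb.1 i j hn, add_zero]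
  · have hp' : p ∈ (a i j).support ∪ (b i j).support := Finsupp.support_add hp
    rcases Finset.mem_union.1 hp' with hp' | hp'
    · exact ha.2.1 i j hij hj p hp'
    · exact hb.2.1 i j hij hj p hp'
  · show a i k + b i k = (a i j + b i j) + h i j hij (a j k + b j k)
    rw [ha.2.2 i j k hij hjk hk, hb.2.2 i j k hij hjk hk, map_add]
    abel

theorem Gr_smul {a : ∀ i, Ordinal → GMod R T i} (r : R) (ha : a ∈ Gr R T γ h) :
    r • a ∈ Gr R T γ h := by
  refine ⟨fun i j hn => ?_, fun i j hij hj p hp => ?_, fun i j k hij hjk hk => ?_⟩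
  · show r • a i j = 0
    rw [ha.1 i j hn, smul_zero]
  · exact ha.2.1 i j hij hj p (Finsupp.support_smul hp)
  · show r • a i k = r • a i j + h i j hij (r • a j k)
    rw [ha.2.2 i j k hij hjk hk, map_smul, smul_add]

theorem Gr_neg {a : ∀ i, Ordinal → GMod R T i} (ha : a ∈ Gr R T γ h) :
    -a ∈ Gr R T γ h := by
  refine ⟨fun i j hn => ?_, fun i j hij hj p hp => ?_, fun i j k hij hjk hk => ?_⟩
  · show -(a i j) = 0
    rw [ha.1 i j hn, neg_zero]
  · refine ha.2.1 i j hij hj p ?_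
    simpa using hp
  · show -(a i k) = -(a i j) + h i j hij (-(a j k))
    rw [ha.2.2 i j k hij hjk hk, map_neg]
    abel

theorem Fact_zero : (0 : ∀ i, Ordinal → GMod R T i) ∈ Fact R T γ h := by
  refine ⟨fun i j _ => rfl, 0, fun i _ p hp => absurd hp (by simp), fun i j hij hj => ?_⟩
  simp

theorem Fact_add {a b : ∀ i, Ordinal → GMod R T i} (ha : a ∈ Fact R T γ h)
    (hb : b ∈ Fact R T γ h) : a + b ∈ Fact R T γ h := by
  classical
  obtain ⟨ha0, y, hy, hye⟩ := ha
  obtain ⟨hb0, z, hz, hze⟩ := hb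
  refine ⟨fun i j hn => ?_, y + z, fun i hi p hp => ?_, fun i j hij hj => ?_⟩
  · show a i j + b i j = 0
    rw [ha0 i j hn, hb0 i j hn, add_zero]
  · have hp' : p ∈ (y i).support ∪ (z i).support := Finsupp.support_add hp
    rcases Finset.mem_union.1 hp' with hp' | hp'
    · exact hy i hi p hp'
    · exact hz i hi p hp'
  · show a i j + b i j = (y i + z i) - h i j hij (y j + z j)
    rw [hye i j hij hj, hze i j hij hj, map_add]
    abel

theorem Fact_neg {a : ∀ i, Ordinal → GMod R T i} (ha : a ∈ Fact R T γ h) :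
    -a ∈ Fact R T γ h := by
  obtain ⟨ha0, y, hy, hye⟩ := ha
  refine ⟨fun i j hn => ?_, -y, fun i hi p hp => ?_, fun i j hij hj => ?_⟩
  · show -(a i j) = 0
    rw [ha0 i j hn, neg_zero]
  · refine hy i hi p ?_
    simpa using hp
  · show -(a i j) = (-(y i)) - h i j hij (-(y j))
    rw [hye i j hij hj, map_neg]
    abel

theorem Fact_subset_Gr (hres : resCoh T res) (hh : hdef R T res h)
    {a : ∀ i, Ordinal → GMod R T i} (ha : a ∈ Fact R T γ h) : a ∈ Gr R T γ h := by
  classical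
  obtain ⟨ha0, y, hy, hye⟩ := ha
  refine ⟨ha0, fun i j hij hj p hp => ?_, fun i j k hij hjk hk => ?_⟩
  · rw [hye i j hij hj] at hp
    have hp' := Finsupp.support_sub hp
    rcases Finset.mem_union.1 hp' with hp' | hp'
    · exact hy i (hij.trans hj) p hp'
    · rw [h_eq hh hij] at hp'
      have hp'' := Finsupp.support_sub hp'
      rcases Finset.mem_union.1 hp'' with hp'' | hp''
      · obtain ⟨q, hq, hqe⟩ := Finset.mem_image.1 (Finsupp.mapDomain_support hp'')
        have := hy j hj q hq
        constructor
        · rw [← hqe]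
          exact hij.trans this.1
        · rw [← hqe]
          exact this.2
      · obtain ⟨q, _, hqe⟩ := Finset.mem_image.1 (Finsupp.mapDomain_support hp'')
        rw [← hqe]
        exact ⟨hij, hj⟩
  · rw [hye i j hij (hjk.trans hk), hye i k (hij.trans hjk) hk, hye j k hjk hk, map_sub,
      h_comp hres hh hij hjk]
    abel

theorem branchElt_pos {t : ∀ i, i < γ → T i} {i j : Ordinal} (hc : i < γ ∧ i < j ∧ j < γ) :
    branchElt R T γ t i j = Finsupp.single (t i hc.1, j) (1 : R) :=
  dif_pos hc

theorem branchElt_neg' {t : ∀ i, i < γ → T i} {i j : Ordinal} (hc : ¬(i < γ ∧ i < j ∧ j < γ)) :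
    branchElt R T γ t i j = 0 :=
  dif_neg hc

theorem branchElt_mem_Gr (hh : hdef R T res h) {t : ∀ i, i < γ → T i}
    (ht : IsBranch T γ res t) : branchElt R T γ t ∈ Gr R T γ h := by
  refine ⟨fun i j hn => ?_, fun i j hij hj p hp => ?_, fun i j k hij hjk hk => ?_⟩
  · exact dif_neg fun hc => hn ⟨hc.2.1, hc.2.2⟩
  · have hiγ : i < γ := hij.trans hj
    rw [branchElt_pos ⟨hiγ, hij, hj⟩] at hp
    have := Finsupp.support_single_subset hp
    rw [Finset.mem_singleton] at this
    rw [this]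
    exact ⟨hij, hj⟩
  · have hiγ : i < γ := hij.trans (hjk.trans hk)
    have hjγ : j < γ := hjk.trans hk
    rw [branchElt_pos ⟨hiγ, hij.trans hjk, hk⟩, branchElt_pos (t := t) ⟨hiγ, hij, hjγ⟩,
      branchElt_pos (t := t) ⟨hjγ, hjk, hk⟩, hh i j hij (t j hjγ) k, ht i j hij hjγ]
    abel

theorem span_BrSet_subset_Gr (hh : hdef R T res h) {x : ∀ i, Ordinal → GMod R T i}
    (hx : x ∈ Submodule.span R (BrSet R T γ res)) : x ∈ Gr R T γ h := by
  induction hx using Submodule.span_induction with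
  | mem x hxx =>
    obtain ⟨t, ht, rfl⟩ := hxx
    exact branchElt_mem_Gr hh ht
  | zero => exact Gr_zero
  | add x y _ _ hx hy => exact Gr_add hx hy
  | smul r x _ hx => exact Gr_smul r hx

theorem span_BrSet_P {x : ∀ i, Ordinal → GMod R T i}
    (hx : x ∈ Submodule.span R (BrSet R T γ res)) :
    ∀ i j (p : T i × Ordinal), p.2 ≠ j → x i j p = 0 := by
  induction hx using Submodule.span_induction with
  | mem x hxx =>
    obtain ⟨t, ht, rfl⟩ := hxx
    intro i j p hp
    classical
    by_cases hc : i < γ ∧ i < j ∧ j < γ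
    · rw [branchElt_pos hc, Finsupp.single_apply, if_neg]
      rintro rfl
      exact hp rfl
    · rw [branchElt_neg' hc]
      rfl
  | zero => intro i j p _; rfl
  | add x y _ _ hx hy =>
    intro i j p hp
    show x i j p + y i j p = 0
    rw [hx i j p hp, hy i j p hp, add_zero]
  | smul r x _ hx =>
    intro i j p hp
    show r • (x i j p) = 0
    rw [hx i j p hp, smul_zero]

theorem Fact_P_eq_zero (hγ : Order.IsSuccLimit γ) (hh : hdef R T res h)
    {a : ∀ i, Ordinal → GMod R T i} (ha : a ∈ Fact R T γ h)
    (hP : ∀ i j (p : T i × Ordinal), p.2 ≠ j → a i j p = 0) : a = 0 := by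
  obtain ⟨ha0, y, hy, hye⟩ := ha
  have yzero : ∀ i, i < γ → y i = 0 := by
    intro i hi
    ext p
    simp only [Finsupp.coe_zero, Pi.zero_apply]
    by_contra hne
    have hps : p ∈ (y i).support := Finsupp.mem_support_iff.2 hne
    obtain ⟨hip, hpγ⟩ := hy i hi p hps
    set j := p.2 + 1 with hjdef
    have hp2j : p.2 < j := by
      rw [hjdef, Ordinal.add_one_eq_succ]
      exact Order.lt_succ p.2
    have hjγ : j < γ := by
      rw [hjdef, Ordinal.add_one_eq_succ]
      exact hγ.succ_lt hpγ
    have hij : i < j := hip.trans hp2j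
    have heq := hye i j hij hjγ
    have heval := DFunLike.congr_fun heq p
    rw [hP i j p (ne_of_lt hp2j)] at heval
    have hzero : (h i j hij (y j)) p = 0 := by
      rw [h_eq hh hij]
      rw [Finsupp.sub_apply]
      rw [mapDomain_apply_zero, mapDomain_apply_zero, sub_zero]
      · intro q _ hq
        have : j = p.2 := congrArg Prod.snd hq
        exact absurd this (ne_of_gt hp2j)
      · intro q hq hqe
        have hq2 : j < q.2 := (hy j hjγ q hq).1
        have : q.2 = p.2 := congrArg Prod.snd hqe
        rw [this] at hq2
        exact absurd (hp2j.trans hq2) (lt_irrefl _)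
    rw [Finsupp.sub_apply, hzero, sub_zero] at heval
    exact hne heval.symm
  funext i j
  by_cases hc : i < j ∧ j < γ
  · rw [hye i j hc.1 hc.2, yzero i (hc.1.trans hc.2), yzero j hc.2, map_zero, sub_zero]
    rfl
  · rw [ha0 i j hc]
    rfl

end AuxSub
section AuxPart2

variable {R} {T} {res : ∀ i j, i < j → T j → T i}
variable {h : ∀ i j, i < j → GMod R T j →ₗ[R] GMod R T i} {γ : Ordinal}

theorem part2 (hγ : Order.IsSuccLimit γ) (hh : hdef R T res h)
    (hgen : ∀ a ∈ Gr R T γ h, ∃ s ∈ Submodule.span R (BrSet R T γ res),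
      a - s ∈ Fact R T γ h) :
    Cardinal.mk
        (Quot fun a b : {x // x ∈ Gr R T γ h} => a.1 - b.1 ∈ Fact R T γ h) =
      Cardinal.mk (Submodule.span R (BrSet R T γ res)) := by
  set rel := fun a b : {x // x ∈ Gr R T γ h} => a.1 - b.1 ∈ Fact R T γ h with hrel
  have hequiv : Equivalence rel := by
    constructor
    · intro a
      show a.1 - a.1 ∈ Fact R T γ h
      rw [sub_self]
      exact Fact_zero
    · intro a b hab
      show b.1 - a.1 ∈ Fact R T γ h
      have := Fact_neg hab
      rwa [neg_sub] at this
    · intro a b c hab hbc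
      show a.1 - c.1 ∈ Fact R T γ h
      have := Fact_add hab hbc
      rwa [sub_add_sub_cancel] at this
  let f : Submodule.span R (BrSet R T γ res) → Quot rel :=
    fun s => Quot.mk rel ⟨s.1, span_BrSet_subset_Gr hh s.2⟩
  have hbij : Function.Bijective f := by
    constructor
    · intro s s' hss
      have h1 : rel ⟨s.1, _⟩ ⟨s'.1, _⟩ := hequiv.eqvGen_iff.mp (Quot.eqvGen_exact hss)
      have h2 : s.1 - s'.1 ∈ Fact R T γ h := h1
      have h3 : (s.1 - s'.1) ∈ Submodule.span R (BrSet R T γ res) :=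
        Submodule.sub_mem _ s.2 s'.2
      have h4 : s.1 - s'.1 = 0 :=
        Fact_P_eq_zero hγ hh h2 (span_BrSet_P h3)
      exact Subtype.ext (sub_eq_zero.mp h4)
    · intro q
      induction q using Quot.ind with
      | mk a =>
        obtain ⟨s, hs, hfact⟩ := hgen a.1 a.2
        refine ⟨⟨s, hs⟩, ?_⟩
        apply Quot.sound
        show s - a.1 ∈ Fact R T γ h
        have := Fact_neg hfact
        rwa [neg_sub] at this
  exact Cardinal.mk_congr (Equiv.ofBijective f hbij).symm

end AuxPart2
section AuxEv

variable {R} {T} {res : ∀ i j, i < j → T j → T i}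
variable {h : ∀ i j, i < j → GMod R T j →ₗ[R] GMod R T i} {γ : Ordinal}

theorem h_apply_zero_of_snd_lt (hh : hdef R T res h) {i j : Ordinal} (hij : i < j)
    (z : GMod R T j) (hz : ∀ q ∈ z.support, j < q.2) (p : T i × Ordinal) (hpj : p.2 < j) :
    (h i j hij z) p = 0 := by
  rw [h_eq hh hij, Finsupp.sub_apply, mapDomain_apply_zero, mapDomain_apply_zero, sub_zero]
  · intro q _ hq
    have : j = p.2 := congrArg Prod.snd hq
    rw [this] at hpj
    exact lt_irrefl _ hpj
  · intro q hq hqe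
    have h1 : j < q.2 := hz q hq
    have h2 : q.2 = p.2 := congrArg Prod.snd hqe
    rw [h2] at h1
    exact absurd (hpj.trans h1) (lt_irrefl _)

/-- The eventual value of `a i j p` for large `j`. -/
noncomputable def ev (a : ∀ i, Ordinal → GMod R T i) (i : Ordinal) (p : T i × Ordinal) : R :=
  a i (max (p.2 + 1) (i + 1)) p

theorem stab (hh : hdef R T res h) {a : ∀ i, Ordinal → GMod R T i} (ha : a ∈ Gr R T γ h)
    {i j k : Ordinal} (hij : i < j) (hjk : j < k) (hk : k < γ) (p : T i × Ordinal)
    (hpj : p.2 < j) : a i k p = a i j p := by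
  have heq := ha.2.2 i j k hij hjk hk
  have heval := DFunLike.congr_fun heq p
  rw [Finsupp.add_apply, h_apply_zero_of_snd_lt hh hij (a j k)
    (fun q hq => (ha.2.1 j k hjk hk q hq).1) p hpj, add_zero] at heval
  exact heval

theorem ev_eq (hh : hdef R T res h) {a : ∀ i, Ordinal → GMod R T i} (ha : a ∈ Gr R T γ h)
    {i j : Ordinal} (hij : i < j) (hjγ : j < γ) (p : T i × Ordinal) (hpj : p.2 < j) :
    a i j p = ev a i p := by
  set m := max (p.2 + 1) (i + 1) with hm
  have hpm : p.2 < m := lt_of_lt_of_le (by rw [Ordinal.add_one_eq_succ]; exact Order.lt_succ _)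
    (le_max_left _ _)
  have him : i < m := lt_of_lt_of_le (by rw [Ordinal.add_one_eq_succ]; exact Order.lt_succ _)
    (le_max_right _ _)
  have hmj : m ≤ j := by
    apply max_le
    · rw [Ordinal.add_one_eq_succ]
      exact Order.succ_le_iff.2 hpj
    · rw [Ordinal.add_one_eq_succ]
      exact Order.succ_le_iff.2 hij
  rcases eq_or_lt_of_le hmj with heq | hlt
  · rw [ev, ← hm, heq]
  · exact stab hh ha him hlt hjγ p hpm

theorem ev_zero (hh : hdef R T res h) (hγ : Order.IsSuccLimit γ) {a : ∀ i, Ordinal → GMod R T i}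
    (ha : a ∈ Gr R T γ h) {i : Ordinal} (hi : i < γ) (p : T i × Ordinal)
    (hp : ¬(i < p.2 ∧ p.2 < γ)) : ev a i p = 0 := by
  set m := max (p.2 + 1) (i + 1) with hm
  by_cases hpγ : p.2 < γ
  · -- then ¬ i < p.2, i.e. p.2 ≤ i, and m = i + 1 < γ
    have hpi : p.2 ≤ i := le_of_not_gt fun hc => hp ⟨hc, hpγ⟩
    have hmiγ : m < γ := by
      apply max_lt
      · rw [Ordinal.add_one_eq_succ]
        exact hγ.succ_lt (lt_of_le_of_lt hpi hi)
      · rw [Ordinal.add_one_eq_succ]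
        exact hγ.succ_lt hi
    have him : i < m := lt_of_lt_of_le (by rw [Ordinal.add_one_eq_succ]; exact Order.lt_succ _)
      (le_max_right _ _)
    rw [ev, ← hm]
    by_contra hne
    have hps : p ∈ (a i m).support := Finsupp.mem_support_iff.2 hne
    have := (ha.2.1 i m him hmiγ p hps).1
    exact absurd (lt_of_lt_of_le this hpi) (lt_irrefl _)
  · -- p.2 ≥ γ, so m > γ and a i m = 0
    have hmγ : ¬ m < γ := by
      intro hc
      apply hpγ
      calc p.2 < p.2 + 1 := by rw [Ordinal.add_one_eq_succ]; exact Order.lt_succ _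
        _ ≤ m := le_max_left _ _
        _ < γ := hc
    rw [ev, ← hm, ha.1 i m (fun hc => hmγ hc.2)]
    rfl

theorem ev_finite (hh : hdef R T res h) (hγ : Order.IsSuccLimit γ) (hcof : Cardinal.aleph0 < γ.cof)
    {a : ∀ i, Ordinal → GMod R T i} (ha : a ∈ Gr R T γ h) {i : Ordinal} (hi : i < γ) :
    (Function.support (ev a i)).Finite := by
  classical
  by_contra hinf
  by_cases hbdd : ∃ β < γ, ∀ p : T i × Ordinal, ev a i p ≠ 0 → p.2 < β
  · -- bounded case: support included in support of a single a i j
    obtain ⟨β, hβγ, hβ⟩ := hbdd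
    set j := max β (i + 1) with hj
    have hij : i < j := lt_of_lt_of_le
      (by rw [Ordinal.add_one_eq_succ]; exact Order.lt_succ _) (le_max_right _ _)
    have hjγ : j < γ := max_lt hβγ (by rw [Ordinal.add_one_eq_succ]; exact hγ.succ_lt hi)
    apply hinf
    apply Set.Finite.subset (Finset.finite_toSet (a i j).support)
    intro p hp
    have hpe : ev a i p ≠ 0 := hp
    have hpj : p.2 < j := lt_of_lt_of_le (hβ p hpe) (le_max_left _ _)
    rw [Finset.mem_coe, Finsupp.mem_support_iff, ev_eq hh ha hij hjγ p hpj]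
    exact hpe
  · -- unbounded case: build an ω-sequence, contradict cofinality
    push_neg at hbdd
    have hub : ∀ β, β < γ → ∃ p : T i × Ordinal, ev a i p ≠ 0 ∧ β ≤ p.2 := by
      intro β hβ
      obtain ⟨p, hp1, hp2⟩ := hbdd β hβ
      exact ⟨p, hp1, hp2⟩
    choose pf hpf1 hpf2 using hub
    -- the recursive sequence
    have hsucclt : ∀ β, β < γ → β + 1 < γ := fun β hβ => by
      rw [Ordinal.add_one_eq_succ]; exact hγ.succ_lt hβ
    have hevlt : ∀ β (hβ : β < γ), (pf β hβ).2 < γ := by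
      intro β hβ
      by_contra hc
      exact hpf1 β hβ (ev_zero hh hγ ha hi _ (fun hcc => hc hcc.2))
    let g : ℕ → {o : Ordinal // o < γ} := fun n => Nat.rec
      ⟨i + 1, hsucclt i hi⟩
      (fun _ prev => ⟨(pf prev.1 prev.2).2 + 1, hsucclt _ (hevlt prev.1 prev.2)⟩) n
    have hgsucc : ∀ n, (g (n + 1)).1 = (pf (g n).1 (g n).2).2 + 1 := fun n => rfl
    have hδ : (⨆ n, (g n).1) < γ := Ordinal.iSup_lt_ord_lift
      (by rw [Cardinal.mk_nat, Cardinal.lift_aleph0]; exact hcof) (fun n => (g n).2)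
    set δ := ⨆ n, (g n).1 with hδdef
    set j := δ + 1 with hjdef
    have hjγ : j < γ := hsucclt δ hδ
    have hglesup : ∀ n, (g n).1 ≤ δ := fun n => Ordinal.le_iSup (fun n => (g n).1) n
    have hij : i < j := by
      calc i < i + 1 := by rw [Ordinal.add_one_eq_succ]; exact Order.lt_succ _
        _ = (g 0).1 := rfl
        _ ≤ δ := hglesup 0
        _ < j := by rw [hjdef, Ordinal.add_one_eq_succ]; exact Order.lt_succ _
    -- the points pf (g n) are distinct elements of the support of a i j
    have hpltj : ∀ n, (pf (g n).1 (g n).2).2 < j := by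
      intro n
      calc (pf (g n).1 (g n).2).2 < (pf (g n).1 (g n).2).2 + 1 := by
            rw [Ordinal.add_one_eq_succ]; exact Order.lt_succ _
        _ = (g (n + 1)).1 := (hgsucc n).symm
        _ ≤ δ := hglesup (n + 1)
        _ < j := by rw [hjdef, Ordinal.add_one_eq_succ]; exact Order.lt_succ _
    have hmem : ∀ n, pf (g n).1 (g n).2 ∈ (a i j).support := by
      intro n
      rw [Finsupp.mem_support_iff, ev_eq hh ha hij hjγ _ (hpltj n)]
      exact hpf1 _ _
    have hsndmono : ∀ n, (pf (g n).1 (g n).2).2 < (pf (g (n + 1)).1 (g (n + 1)).2).2 := by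
      intro n
      calc (pf (g n).1 (g n).2).2 < (g (n + 1)).1 := by
            rw [hgsucc n, Ordinal.add_one_eq_succ]; exact Order.lt_succ _
        _ ≤ (pf (g (n + 1)).1 (g (n + 1)).2).2 := hpf2 _ _
    have hsndstrict : StrictMono (fun n => (pf (g n).1 (g n).2).2) :=
      strictMono_nat_of_lt_succ hsndmono
    have hinj : Function.Injective (fun n => pf (g n).1 (g n).2) := by
      intro m n hmn
      by_contra hne
      have : (pf (g m).1 (g m).2).2 = (pf (g n).1 (g n).2).2 := congrArg Prod.snd hmn
      exact absurd (hsndstrict.injective this) hne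
    exact (Set.infinite_of_injective_forall_mem hinj
      (fun n => Finset.mem_coe.2 (hmem n))).elim (Finset.finite_toSet _)
end AuxEv
section AuxGen

variable {R} {T} {res : ∀ i j, i < j → T j → T i}
variable {h : ∀ i j, i < j → GMod R T j →ₗ[R] GMod R T i} {γ : Ordinal}

theorem gen_core (hγ : Order.IsSuccLimit γ) (hcof : Cardinal.aleph0 < γ.cof) (hres : resCoh T res)
    (hh : hdef R T res h) {b : ∀ i, Ordinal → GMod R T i} (hbGr : b ∈ Gr R T γ h)
    (hbP : ∀ i j (p : T i × Ordinal), i < j → j < γ → p.2 ≠ j → b i j p = 0) :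
    b ∈ Submodule.span R (BrSet R T γ res) := by
  classical
  have hlt1 : ∀ o : Ordinal, o < o + 1 := fun o => by
    rw [Ordinal.add_one_eq_succ]; exact Order.lt_succ o
  have hsucc : ∀ {β : Ordinal}, β < γ → β + 1 < γ := fun {β} hβ => by
    rw [Ordinal.add_one_eq_succ]; exact hγ.succ_lt hβ
  have hsupp_snd : ∀ {j k : Ordinal}, j < k → k < γ → ∀ q ∈ (b j k).support, q.2 = k := by
    intro j k hjk hkγ q hq
    by_contra hne
    exact Finsupp.mem_support_iff.1 hq (hbP j k q hjk hkγ hne)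
  -- first coefficient formula : b i j (ν, j) as a sum over the support of b j k
  have hA : ∀ i j k (ν : T i) (hij : i < j) (hjk : j < k) (hkγ : k < γ),
      b i j (ν, j) = ∑ q ∈ (b j k).support,
        if res i j hij q.1 = ν then b j k q else 0 := by
    intro i j k ν hij hjk hkγ
    have heval := DFunLike.congr_fun (hbGr.2.2 i j k hij hjk hkγ) ((ν, j) : T i × Ordinal)
    have hik0 : b i k ((ν, j) : T i × Ordinal) = 0 :=
      hbP i k (ν, j) (hij.trans hjk) hkγ (ne_of_lt hjk)
    rw [hik0, Finsupp.add_apply, h_eq hh hij, Finsupp.sub_apply] at heval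
    have he1 : Finsupp.mapDomain (fun p : T j × Ordinal => (res i j hij p.1, p.2))
        (b j k) ((ν, j) : T i × Ordinal) = 0 := by
      apply mapDomain_apply_zero
      intro q hq hqe
      have h2 : q.2 = j := congrArg Prod.snd hqe
      rw [hsupp_snd hjk hkγ q hq] at h2
      exact (ne_of_gt hjk) h2
    rw [he1, zero_sub] at heval
    have hXY : b i j ((ν, j) : T i × Ordinal) = Finsupp.mapDomain
        (fun p : T j × Ordinal => (res i j hij p.1, j)) (b j k) ((ν, j) : T i × Ordinal) := by
      have h3 := heval.symm
      rwa [add_neg_eq_zero] at h3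
    rw [hXY, mapDomain_apply_eq_sum]
    refine Finset.sum_congr rfl fun q _ => ?_
    refine if_congr ?_ rfl rfl
    constructor
    · intro hc
      exact (Prod.mk.injEq _ _ _ _ ▸ hc).1
    · intro hc
      rw [hc]
  -- second coefficient formula
  have hB : ∀ i j k (ν : T i) (hij : i < j) (hjk : j < k) (hkγ : k < γ),
      b i k (ν, k) = ∑ q ∈ (b j k).support,
        if res i j hij q.1 = ν then b j k q else 0 := by
    intro i j k ν hij hjk hkγ
    have heval := DFunLike.congr_fun (hbGr.2.2 i j k hij hjk hkγ) ((ν, k) : T i × Ordinal)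
    have hij0 : b i j ((ν, k) : T i × Ordinal) = 0 :=
      hbP i j (ν, k) hij (hjk.trans hkγ) (ne_of_gt hjk)
    have he2 : Finsupp.mapDomain (fun p : T j × Ordinal => (res i j hij p.1, j))
        (b j k) ((ν, k) : T i × Ordinal) = 0 := by
      apply mapDomain_apply_zero
      intro q _ hqe
      exact (ne_of_lt hjk) (congrArg Prod.snd hqe)
    rw [Finsupp.add_apply, hij0, zero_add, h_eq hh hij, Finsupp.sub_apply, he2,
      sub_zero] at heval
    rw [heval, mapDomain_apply_eq_sum]
    refine Finset.sum_congr rfl fun q hq => ?_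
    refine if_congr ?_ rfl rfl
    constructor
    · intro hc
      exact (Prod.mk.injEq _ _ _ _ ▸ hc).1
    · intro hc
      rw [hc, hsupp_snd hjk hkγ q hq]
  have KR : ∀ i j k (ν : T i), i < j → j < k → k < γ → b i j (ν, j) = b i k (ν, k) := by
    intro i j k ν hij hjk hkγ
    rw [hA i j k ν hij hjk hkγ, hB i j k ν hij hjk hkγ]
  have Dconst : ∀ i j j' (ν : T i), i < j → j < γ → i < j' → j' < γ →
      b i j (ν, j) = b i j' (ν, j') := by
    intro i j j' ν hij hjγ hij' hj'γ
    rcases lt_trichotomy j j' with hlt | heq | hgt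
    · exact KR i j j' ν hij hlt hj'γ
    · rw [heq]
    · exact (KR i j' j ν hij' hgt hjγ).symm
  -- PR : pushforward formula anchored at j+1
  have PR : ∀ i j (ν : T i) (hij : i < j), j < γ →
      b i j (ν, j) = ∑ q ∈ (b j (j + 1)).support,
        if res i j hij q.1 = ν then b j (j + 1) q else 0 := by
    intro i j ν hij hjγ
    exact hA i j (j + 1) ν hij (hlt1 j) (hsucc hjγ)
  -- surjectivity of the restriction maps between supports
  have hsurj : ∀ i j (hij : i < j), j < γ →
      Set.SurjOn (fun q : T j × Ordinal => ((res i j hij q.1, i + 1) : T i × Ordinal))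
        ↑((b j (j + 1)).support) ↑((b i (i + 1)).support) := by
    intro i j hij hjγ p hp
    have hiγ : i < γ := hij.trans hjγ
    have hp2 : p.2 = i + 1 := hsupp_snd (hlt1 i) (hsucc hiγ) p (Finset.mem_coe.1 hp)
    have hpval : b i (i + 1) (p.1, i + 1) ≠ 0 := by
      have : p = (p.1, i + 1) := by rw [← hp2]
      rw [← this]
      exact Finsupp.mem_support_iff.1 (Finset.mem_coe.1 hp)
    have hkey : b i (i + 1) (p.1, i + 1) = b i j (p.1, j) :=
      Dconst i (i + 1) j p.1 (hlt1 i) (hsucc hiγ) hij hjγ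
    rw [hkey, PR i j p.1 hij hjγ] at hpval
    obtain ⟨q, hq, hqne⟩ := Finset.exists_ne_zero_of_sum_ne_zero hpval
    have hqres : res i j hij q.1 = p.1 := by
      by_contra hc
      rw [if_neg hc] at hqne
      exact hqne rfl
    refine ⟨q, hq, ?_⟩
    show (res i j hij q.1, i + 1) = p
    rw [hqres, ← hp2]
  have Nmono : ∀ i j, i < j → j < γ →
      (b i (i + 1)).support.card ≤ (b j (j + 1)).support.card := by
    intro i j hij hjγ
    exact Finset.card_le_card_of_surjOn _ (hsurj i j hij hjγ)
  -- stabilization of the support size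
  have Nstab : ∃ i₀, i₀ < γ ∧ ∀ j, i₀ ≤ j → j < γ →
      (b j (j + 1)).support.card = (b i₀ (i₀ + 1)).support.card := by
    by_contra hcon
    push_neg at hcon
    have hstep : ∀ i, i < γ → ∃ j, j < γ ∧ i < j ∧
        (b i (i + 1)).support.card + 1 ≤ (b j (j + 1)).support.card := by
      intro i hiγ
      obtain ⟨j, hij, hjγ, hne⟩ := hcon i hiγ
      have hilt : i < j := by
        rcases eq_or_lt_of_le hij with heq | hlt
        · exact absurd (by rw [heq]) hne
        · exact hlt
      have := Nmono i j hilt hjγ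
      refine ⟨j, hjγ, hilt, ?_⟩
      omega
    choose jf hjf1 hjf2 hjf3 using hstep
    let g : ℕ → {o : Ordinal // o < γ} := fun n => Nat.rec
      ⟨0, hγ.pos⟩ (fun _ prev => ⟨jf prev.1 prev.2, hjf1 prev.1 prev.2⟩) n
    have hgN : ∀ n : ℕ, n ≤ (b (g n).1 ((g n).1 + 1)).support.card := by
      intro n
      induction n with
      | zero => exact Nat.zero_le _
      | succ m ih =>
        have := hjf3 (g m).1 (g m).2
        have hgs : (g (m + 1)).1 = jf (g m).1 (g m).2 := rfl
        rw [hgs]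
        omega
    have hδ : (⨆ n, (g n).1) < γ := Ordinal.iSup_lt_ord_lift
      (by rw [Cardinal.mk_nat, Cardinal.lift_aleph0]; exact hcof) (fun n => (g n).2)
    set δ := ⨆ n, (g n).1 with hδdef
    have hgle : ∀ n, (g n).1 ≤ δ := fun n => Ordinal.le_iSup (fun n => (g n).1) n
    have hbig : ∀ n : ℕ, n ≤ (b δ (δ + 1)).support.card := by
      intro n
      rcases eq_or_lt_of_le (hgle n) with heq | hlt
      · rw [← heq]
        exact hgN n
      · exact le_trans (hgN n) (Nmono (g n).1 δ hlt hδ)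
    have := hbig ((b δ (δ + 1)).support.card + 1)
    omega
  obtain ⟨i₀, hi₀γ, hN⟩ := Nstab
  -- structure of the supports above i₀
  have himg : ∀ i j (hii₀ : i₀ ≤ i) (hij : i < j) (hjγ : j < γ),
      Finset.image (fun q : T j × Ordinal => ((res i j hij q.1, i + 1) : T i × Ordinal))
        (b j (j + 1)).support = (b i (i + 1)).support := by
    intro i j hii₀ hij hjγ
    have hiγ : i < γ := hij.trans hjγ
    refine (Finset.eq_of_subset_of_card_le ?_ ?_).symm
    · intro p hp
      obtain ⟨q, hq, hqe⟩ := hsurj i j hij hjγ (Finset.mem_coe.2 hp)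
      exact Finset.mem_image.2 ⟨q, Finset.mem_coe.1 hq, hqe⟩
    · calc (Finset.image _ (b j (j + 1)).support).card
          ≤ (b j (j + 1)).support.card := Finset.card_image_le
        _ = (b i₀ (i₀ + 1)).support.card := hN j (hii₀.trans hij.le) hjγ
        _ = (b i (i + 1)).support.card := (hN i hii₀ hiγ).symm
  have hinj : ∀ i j (hii₀ : i₀ ≤ i) (hij : i < j) (hjγ : j < γ),
      Set.InjOn (fun q : T j × Ordinal => ((res i j hij q.1, i + 1) : T i × Ordinal))
        ↑((b j (j + 1)).support) := by
    intro i j hii₀ hij hjγ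
    apply Finset.injOn_of_card_image_eq
    rw [himg i j hii₀ hij hjγ]
    rw [hN j (hii₀.trans hij.le) hjγ, hN i hii₀ (hij.trans hjγ)]
  have hval : ∀ i j (hii₀ : i₀ ≤ i) (hij : i < j) (hjγ : j < γ),
      ∀ q ∈ (b j (j + 1)).support,
        b i (i + 1) ((res i j hij q.1, i + 1) : T i × Ordinal) = b j (j + 1) q := by
    intro i j hii₀ hij hjγ q hq
    have hiγ : i < γ := hij.trans hjγ
    have h1 : b i (i + 1) ((res i j hij q.1, i + 1) : T i × Ordinal)
        = b i j (res i j hij q.1, j) :=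
      Dconst i (i + 1) j _ (hlt1 i) (hsucc hiγ) hij hjγ
    rw [h1, PR i j _ hij hjγ]
    rw [Finset.sum_eq_single_of_mem q hq]
    · rw [if_pos rfl]
    · intro q' hq' hne
      rw [if_neg]
      intro hc
      apply hne
      refine hinj i j hii₀ hij hjγ (Finset.mem_coe.2 hq') (Finset.mem_coe.2 hq) ?_
      show ((res i j hij q'.1, i + 1) : T i × Ordinal) = (res i j hij q.1, i + 1)
      rw [hc]
  have hi₀1γ : i₀ + 1 < γ := hsucc hi₀γ
  -- unique lifts of elements of the support at level i₀
  have exU : ∀ (q : T i₀ × Ordinal), q ∈ (b i₀ (i₀ + 1)).support →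
      ∀ i, ∀ (h1 : i₀ < i), i < γ → ∃! p : T i × Ordinal,
        p ∈ (b i (i + 1)).support ∧ ((res i₀ i h1 p.1, i₀ + 1) : T i₀ × Ordinal) = q := by
    intro q hq i h1 hiγ
    have hq' := hq
    rw [← himg i₀ i le_rfl h1 hiγ] at hq'
    obtain ⟨p, hp, hpe⟩ := Finset.mem_image.1 hq'
    refine ⟨p, ⟨hp, hpe⟩, ?_⟩
    rintro p' ⟨hp', hp'e⟩
    refine hinj i₀ i le_rfl h1 hiγ (Finset.mem_coe.2 hp') (Finset.mem_coe.2 hp) ?_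
    show ((res i₀ i h1 p'.1, i₀ + 1) : T i₀ × Ordinal) = (res i₀ i h1 p.1, i₀ + 1)
    rw [hp'e, hpe]
  choose L hLspec using exU
  have hL1 : ∀ q hq i h1 h2, L q hq i h1 h2 ∈ (b i (i + 1)).support :=
    fun q hq i h1 h2 => (hLspec q hq i h1 h2).1.1
  have hL2 : ∀ q hq i h1 h2,
      ((res i₀ i h1 (L q hq i h1 h2).1, i₀ + 1) : T i₀ × Ordinal) = q :=
    fun q hq i h1 h2 => (hLspec q hq i h1 h2).1.2
  have hLu : ∀ q hq i h1 h2 (p' : T i × Ordinal), p' ∈ (b i (i + 1)).support →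
      ((res i₀ i h1 p'.1, i₀ + 1) : T i₀ × Ordinal) = q → p' = L q hq i h1 h2 :=
    fun q hq i h1 h2 p' ha hb => (hLspec q hq i h1 h2).2 p' ⟨ha, hb⟩
  have hLsnd : ∀ q hq i h1 h2, (L q hq i h1 h2).2 = i + 1 :=
    fun q hq i h1 h2 => hsupp_snd (hlt1 i) (hsucc h2) _ (hL1 q hq i h1 h2)
  -- the branches
  set t : ∀ q, q ∈ (b i₀ (i₀ + 1)).support → ∀ i, i < γ → T i := fun q hq i hi =>
    if h1 : i₀ < i then (L q hq i h1 hi).1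
    else res i (i₀ + 1) (lt_of_le_of_lt (not_lt.1 h1) (hlt1 i₀))
      ((L q hq (i₀ + 1) (hlt1 i₀) hi₀1γ).1) with htdef
  have htpos : ∀ q hq i (h1 : i₀ < i) (hi : i < γ), t q hq i hi = (L q hq i h1 hi).1 := by
    intro q hq i h1 hi
    rw [htdef]
    exact dif_pos h1
  have htneg : ∀ q hq i (h1 : ¬ i₀ < i) (hi : i < γ),
      t q hq i hi = res i (i₀ + 1) (lt_of_le_of_lt (not_lt.1 h1) (hlt1 i₀))
        ((L q hq (i₀ + 1) (hlt1 i₀) hi₀1γ).1) := by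
    intro q hq i h1 hi
    rw [htdef]
    exact dif_neg h1
  have hres_mid : ∀ q hq, res i₀ (i₀ + 1) (hlt1 i₀) ((L q hq (i₀ + 1) (hlt1 i₀) hi₀1γ).1)
      = q.1 :=
    fun q hq => congrArg Prod.fst (hL2 q hq (i₀ + 1) (hlt1 i₀) hi₀1γ)
  have htmid : ∀ q hq (hi : i₀ < γ), t q hq i₀ hi = q.1 := by
    intro q hq hi
    rw [htneg q hq i₀ (lt_irrefl i₀) hi]
    exact hres_mid q hq
  -- coherence of lifts above i₀
  have hcoh : ∀ q hq i j (h1i : i₀ < i) (hij : i < j) (hjγ : j < γ),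
      res i j hij ((L q hq j (h1i.trans hij) hjγ).1)
        = (L q hq i h1i (hij.trans hjγ)).1 := by
    intro q hq i j h1i hij hjγ
    have hmem : ((res i j hij ((L q hq j (h1i.trans hij) hjγ).1), i + 1) : T i × Ordinal)
        ∈ (b i (i + 1)).support := by
      rw [← himg i j (le_of_lt h1i) hij hjγ]
      exact Finset.mem_image.2 ⟨L q hq j (h1i.trans hij) hjγ,
        hL1 q hq j (h1i.trans hij) hjγ, rfl⟩
    have heq : ((res i₀ i h1i (res i j hij ((L q hq j (h1i.trans hij) hjγ).1)), i₀ + 1)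
        : T i₀ × Ordinal) = q := by
      rw [hres i₀ i j h1i hij]
      exact hL2 q hq j (h1i.trans hij) hjγ
    have := hLu q hq i h1i (hij.trans hjγ) _ hmem heq
    exact congrArg Prod.fst this
  have hbr : ∀ q hq, IsBranch T γ res (t q hq) := by
    intro q hq i j hij hjγ
    by_cases h1j : i₀ < j
    · by_cases h1i : i₀ < i
      · rw [htpos q hq j h1j hjγ, htpos q hq i h1i (hij.trans hjγ)]
        exact hcoh q hq i j h1i hij hjγ
      · rw [htpos q hq j h1j hjγ, htneg q hq i h1i (hij.trans hjγ)]
        have hle : i₀ + 1 ≤ j := by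
          rw [Ordinal.add_one_eq_succ]
          exact Order.succ_le_iff.2 h1j
        have hii₀1 : i < i₀ + 1 := lt_of_le_of_lt (not_lt.1 h1i) (hlt1 i₀)
        rcases eq_or_lt_of_le hle with heq | hlt
        · subst heq
          rfl
        · rw [← hres i (i₀ + 1) j hii₀1 hlt]
          rw [hcoh q hq (i₀ + 1) j (hlt1 i₀) hlt hjγ]
    · rw [htneg q hq j h1j hjγ, htneg q hq i
        (fun hc => h1j (hc.trans hij)) (hij.trans hjγ)]
      exact hres i j (i₀ + 1) hij (lt_of_le_of_lt (not_lt.1 h1j) (hlt1 i₀)) _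
  -- b is the corresponding combination of branch elements
  have hbs : b = ∑ q ∈ (b i₀ (i₀ + 1)).support.attach,
      b i₀ (i₀ + 1) q.1 • branchElt R T γ (t q.1 q.2) := by
    funext i j
    have hsum_eval : ∀ p : T i × Ordinal,
        (∑ q ∈ (b i₀ (i₀ + 1)).support.attach,
          b i₀ (i₀ + 1) q.1 • branchElt R T γ (t q.1 q.2)) i j p
        = ∑ q ∈ (b i₀ (i₀ + 1)).support.attach,
            b i₀ (i₀ + 1) q.1 • (branchElt R T γ (t q.1 q.2) i j p) := by
      intro p
      rw [Finset.sum_apply, Finset.sum_apply, Finsupp.finset_sum_apply]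
      refine Finset.sum_congr rfl fun q _ => ?_
      rfl
    by_cases hc : i < j ∧ j < γ
    · obtain ⟨hijc, hjγ⟩ := hc
      have hiγ : i < γ := hijc.trans hjγ
      ext p
      obtain ⟨ν, l⟩ := p
      rw [hsum_eval]
      by_cases hl : l = j
      · subst hl
        -- transform each summand into an ite on the branch value
        have hterm : ∀ q (hq : q ∈ (b i₀ (i₀ + 1)).support),
            b i₀ (i₀ + 1) q • (branchElt R T γ (t q hq) i l ((ν, l) : T i × Ordinal))
            = if t q hq i hiγ = ν then b i₀ (i₀ + 1) q else 0 := by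
          intro q hq
          rw [branchElt_pos ⟨hiγ, hijc, hjγ⟩, Finsupp.single_apply]
          by_cases h2 : t q hq i hiγ = ν
          · rw [if_pos h2, if_pos (by rw [h2]), smul_eq_mul, mul_one]
          · rw [if_neg h2, if_neg (fun hcc => h2 (congrArg Prod.fst hcc)), smul_eq_mul,
              mul_zero]
        rw [Finset.sum_congr rfl (fun q _ => hterm q.1 q.2)]
        -- now a case analysis on the position of i relative to i₀
        rcases lt_trichotomy i i₀ with h1 | h1 | h1
        · -- i < i₀
          have hLHS : b i l ((ν, l) : T i × Ordinal) = b i i₀ (ν, i₀) :=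
            Dconst i l i₀ ν hijc hjγ h1 hi₀γ
          rw [hLHS, PR i i₀ ν h1 hi₀γ, ← Finset.sum_attach _
            (fun q => if res i i₀ h1 q.1 = ν then b i₀ (i₀ + 1) q else 0)]
          refine Finset.sum_congr rfl fun q _ => ?_
          refine if_congr ?_ rfl rfl
          have ht : t q.1 q.2 i hiγ = res i i₀ h1 q.1.1 := by
            rw [htneg q.1 q.2 i (fun hcc => absurd (h1.trans hcc) (lt_irrefl _)) hiγ]
            rw [← hres_mid q.1 q.2, hres i i₀ (i₀ + 1) h1 (hlt1 i₀)]
          rw [ht]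
        · -- i = i₀
          subst h1
          have hLHS : b i l ((ν, l) : T i × Ordinal) = b i (i + 1) (ν, i + 1) :=
            Dconst i l (i + 1) ν hijc hjγ (hlt1 i) (hsucc hiγ)
          rw [hLHS]
          by_cases hmem : ((ν, i + 1) : T i × Ordinal) ∈ (b i (i + 1)).support
          · rw [Finset.sum_eq_single_of_mem (⟨(ν, i + 1), hmem⟩ :
                {x // x ∈ (b i (i + 1)).support}) (Finset.mem_attach _ _)]
            · rw [if_pos (htmid _ hmem hiγ)]
            · rintro ⟨q, hq⟩ _ hne
              rw [if_neg]
              intro hcc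
              rw [htmid q hq hiγ] at hcc
              apply hne
              apply Subtype.ext
              show q = (ν, i + 1)
              have hq2 : q.2 = i + 1 := hsupp_snd (hlt1 i) (hsucc hiγ) q hq
              rw [← hcc, ← hq2]
          · rw [Finsupp.notMem_support_iff.1 hmem]
            symm
            apply Finset.sum_eq_zero
            rintro ⟨q, hq⟩ _
            rw [if_neg]
            intro hcc
            rw [htmid q hq hiγ] at hcc
            apply hmem
            have hq2 : q.2 = i + 1 := hsupp_snd (hlt1 i) (hsucc hiγ) q hq
            have hqform : q = ((ν, i + 1) : T i × Ordinal) := by rw [← hcc, ← hq2]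
            rw [← hqform]
            exact hq
        · -- i₀ < i
          have hLHS : b i l ((ν, l) : T i × Ordinal) = b i (i + 1) (ν, i + 1) :=
            Dconst i l (i + 1) ν hijc hjγ (hlt1 i) (hsucc hiγ)
          rw [hLHS]
          by_cases hmem : ((ν, i + 1) : T i × Ordinal) ∈ (b i (i + 1)).support
          · have hqstar : ((res i₀ i h1 ν, i₀ + 1) : T i₀ × Ordinal)
                ∈ (b i₀ (i₀ + 1)).support := by
              rw [← himg i₀ i le_rfl h1 hiγ]
              exact Finset.mem_image.2 ⟨(ν, i + 1), hmem, rfl⟩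
            have hLq : L (res i₀ i h1 ν, i₀ + 1) hqstar i h1 hiγ = ((ν, i + 1) : T i × Ordinal)
              := (hLu (res i₀ i h1 ν, i₀ + 1) hqstar i h1 hiγ (ν, i + 1) hmem rfl).symm
            rw [Finset.sum_eq_single_of_mem (⟨(res i₀ i h1 ν, i₀ + 1), hqstar⟩ :
                {x // x ∈ (b i₀ (i₀ + 1)).support}) (Finset.mem_attach _ _)]
            · rw [if_pos]
              · exact (hval i₀ i le_rfl h1 hiγ (ν, i + 1) hmem).symm
              · rw [htpos _ _ i h1 hiγ, hLq]
            · rintro ⟨q, hq⟩ _ hne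
              rw [if_neg]
              intro hcc
              rw [htpos q hq i h1 hiγ] at hcc
              have hLeq : L q hq i h1 hiγ = ((ν, i + 1) : T i × Ordinal) := by
                have hs := hLsnd q hq i h1 hiγ
                have : L q hq i h1 hiγ = ((L q hq i h1 hiγ).1, (L q hq i h1 hiγ).2) := rfl
                rw [this, hcc, hs]
              apply hne
              apply Subtype.ext
              show q = (res i₀ i h1 ν, i₀ + 1)
              have := hL2 q hq i h1 hiγ
              rw [hLeq] at this
              exact this.symm
          · rw [Finsupp.notMem_support_iff.1 hmem]
            symm
            apply Finset.sum_eq_zero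
            rintro ⟨q, hq⟩ _
            rw [if_neg]
            intro hcc
            rw [htpos q hq i h1 hiγ] at hcc
            apply hmem
            have hLeq : L q hq i h1 hiγ = ((ν, i + 1) : T i × Ordinal) := by
              have hs := hLsnd q hq i h1 hiγ
              have h' : L q hq i h1 hiγ = ((L q hq i h1 hiγ).1, (L q hq i h1 hiγ).2) := rfl
              rw [h', hcc, hs]
            rw [← hLeq]
            exact hL1 q hq i h1 hiγ
      · -- l ≠ j : both sides vanish
        rw [hbP i j (ν, l) hijc hjγ hl]
        symm
        apply Finset.sum_eq_zero
        rintro ⟨q, hq⟩ _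
        by_cases hrange : i < γ ∧ i < j ∧ j < γ
        · have hne : ((t q hq i hrange.1, j) : T i × Ordinal) ≠ (ν, l) :=
            fun hcc => hl (congrArg Prod.snd hcc).symm
          rw [branchElt_pos hrange, Finsupp.single_apply, if_neg hne, smul_zero]
        · rw [branchElt_neg' hrange]
          show _ • ((0 : GMod R T i) (ν, l)) = (0 : R)
          rw [Finsupp.coe_zero, Pi.zero_apply, smul_zero]
    · -- outside the index range both sides are zero
      rw [hbGr.1 i j hc]
      symm
      ext p
      rw [hsum_eval]
      apply Finset.sum_eq_zero
      rintro ⟨q, hq⟩ _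
      rw [branchElt_neg' (fun hcc => hc ⟨hcc.2.1, hcc.2.2⟩)]
      show _ • ((0 : GMod R T i) p) = (0 : R)
      rw [Finsupp.coe_zero, Pi.zero_apply, smul_zero]
  rw [hbs]
  refine Submodule.sum_mem _ fun q _ => Submodule.smul_mem _ _ (Submodule.subset_span ?_)
  exact ⟨t q.1 q.2, hbr q.1 q.2, rfl⟩

end AuxGen
section AuxPart1

variable {R} {T} {res : ∀ i j, i < j → T j → T i}
variable {h : ∀ i j, i < j → GMod R T j →ₗ[R] GMod R T i} {γ : Ordinal}

theorem part1 (hγ : Order.IsSuccLimit γ) (hcof : Cardinal.aleph0 < γ.cof) (hres : resCoh T res)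
    (hh : hdef R T res h) :
    ∀ a ∈ Gr R T γ h, ∃ s ∈ Submodule.span R (BrSet R T γ res), a - s ∈ Fact R T γ h := by
  classical
  intro a ha
  set y : ∀ i, GMod R T i := fun i =>
    if hi : i < γ then Finsupp.ofSupportFinite (ev a i) (ev_finite hh hγ hcof ha hi) else 0
    with hydef
  have hy : ∀ i, i < γ → ∀ p, y i p = ev a i p := by
    intro i hi p
    have h1 : y i = Finsupp.ofSupportFinite (ev a i) (ev_finite hh hγ hcof ha hi) := by
      rw [hydef]
      exact dif_pos hi
    rw [h1]
    exact congrFun Finsupp.ofSupportFinite_coe p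
  have hysupp : ∀ i, i < γ → ∀ p ∈ (y i).support, i < p.2 ∧ p.2 < γ := by
    intro i hi p hp
    by_contra hcc
    refine Finsupp.mem_support_iff.1 hp ?_
    rw [hy i hi p]
    exact ev_zero hh hγ ha hi p hcc
  set Fel : ∀ i, Ordinal → GMod R T i := fun i j =>
    if hc : i < j ∧ j < γ then y i - h i j hc.1 (y j) else 0 with hFdef
  have hFel_pos : ∀ i j (hij : i < j), j < γ → Fel i j = y i - h i j hij (y j) := by
    intro i j hij hj
    rw [hFdef]
    exact dif_pos ⟨hij, hj⟩
  have hFel_neg : ∀ i j, ¬(i < j ∧ j < γ) → Fel i j = 0 := by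
    intro i j hn
    rw [hFdef]
    exact dif_neg hn
  have hFelFact : Fel ∈ Fact R T γ h := ⟨hFel_neg, y, hysupp, hFel_pos⟩
  have hFelGr : Fel ∈ Gr R T γ h := Fact_subset_Gr hres hh hFelFact
  have hbGr : a - Fel ∈ Gr R T γ h := by
    rw [sub_eq_add_neg]
    exact Gr_add ha (Gr_neg hFelGr)
  have hba : ∀ i j (p : T i × Ordinal), (a - Fel) i j p = a i j p - Fel i j p := by
    intro i j p
    show (a i j - Fel i j) p = _
    rw [Finsupp.sub_apply]
  have hbP : ∀ i j (p : T i × Ordinal), i < j → j < γ → p.2 ≠ j → (a - Fel) i j p = 0 := by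
    intro i j p hij hjγ hpj
    have hiγ : i < γ := hij.trans hjγ
    rw [hba, hFel_pos i j hij hjγ, Finsupp.sub_apply]
    by_cases hrange : i < p.2 ∧ p.2 < γ
    · rcases lt_or_gt_of_ne hpj with hlt | hgt
      · -- p.2 < j
        have h1 : a i j p = ev a i p := ev_eq hh ha hij hjγ p hlt
        have h2 : (h i j hij (y j)) p = 0 := h_apply_zero_of_snd_lt hh hij (y j)
          (fun q hq => (hysupp j hjγ q hq).1) p hlt
        rw [h1, h2, hy i hiγ p, sub_zero, sub_self]
      · -- j < p.2
        set k := p.2 + 1 with hk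
        have hp2k : p.2 < k := by rw [hk, Ordinal.add_one_eq_succ]; exact Order.lt_succ _
        have hkγ : k < γ := by rw [hk, Ordinal.add_one_eq_succ]; exact hγ.succ_lt hrange.2
        have hjk : j < k := hgt.trans hp2k
        have hrel := DFunLike.congr_fun (ha.2.2 i j k hij hjk hkγ) p
        rw [Finsupp.add_apply] at hrel
        have haik : a i k p = ev a i p := ev_eq hh ha (hij.trans hjk) hkγ p hp2k
        have hyy : (h i j hij (y j)) p = (h i j hij (a j k)) p := by
          rw [h_eq hh hij, h_eq hh hij, Finsupp.sub_apply, Finsupp.sub_apply]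
          have hz2 : Finsupp.mapDomain (fun q : T j × Ordinal => (res i j hij q.1, j))
              (y j) p = 0 :=
            mapDomain_apply_zero _ _ _ (fun q _ hqe => hpj (congrArg Prod.snd hqe).symm)
          have hz2' : Finsupp.mapDomain (fun q : T j × Ordinal => (res i j hij q.1, j))
              (a j k) p = 0 :=
            mapDomain_apply_zero _ _ _ (fun q _ hqe => hpj (congrArg Prod.snd hqe).symm)
          have he1 : Finsupp.mapDomain (fun q : T j × Ordinal => (res i j hij q.1, q.2))
              (y j) p = Finsupp.mapDomain
                (fun q : T j × Ordinal => (res i j hij q.1, q.2)) (a j k) p := by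
            refine mapDomain_congr_fiber _ _ _ _ (fun q hqe => ?_)
            have hq2 : q.2 = p.2 := congrArg Prod.snd hqe
            rw [hy j hjγ q]
            exact (ev_eq hh ha hjk hkγ q (by rw [hq2]; exact hp2k)).symm
          rw [he1, hz2, hz2']
        rw [haik] at hrel
        rw [hy i hiγ p, hyy, hrel]
        abel
    · -- outside the support range everything vanishes
      have h1 : a i j p = 0 := by
        by_contra hne
        exact hrange (ha.2.1 i j hij hjγ p (Finsupp.mem_support_iff.2 hne))
      have h2 : y i p = 0 := by
        rw [hy i hiγ p]
        exact ev_zero hh hγ ha hiγ p hrange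
      have h3 : (h i j hij (y j)) p = 0 := by
        rw [h_eq hh hij, Finsupp.sub_apply, mapDomain_apply_zero, mapDomain_apply_zero,
          sub_zero]
        · intro q _ hqe
          exact hpj (congrArg Prod.snd hqe).symm
        · intro q hq hqe
          apply hrange
          have hq2 := hysupp j hjγ q hq
          have hq2p : q.2 = p.2 := congrArg Prod.snd hqe
          rw [← hq2p]
          exact ⟨hij.trans hq2.1, hq2.2⟩
      rw [h1, h2, h3]
      simp
  have hspan := gen_core hγ hcof hres hh hbGr hbP
  refine ⟨a - Fel, hspan, ?_⟩
  rw [sub_sub_cancel]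
  exact hFelFact

end AuxPart1
theorem stmt19 (γ : Ordinal) (hγ : Order.IsSuccLimit γ)
    (hcof : max Cardinal.aleph0 (Cardinal.mk R) < γ.cof)
    (res : ∀ i j, i < j → T j → T i) (hres : resCoh T res) (hT : treeHeight T γ)
    (h : ∀ i j, i < j → GMod R T j →ₗ[R] GMod R T i) (hh : hdef R T res h) :
    (∀ a ∈ Gr R T γ h, ∃ s ∈ Submodule.span R (BrSet R T γ res),
        a - s ∈ Fact R T γ h) ∧
    Cardinal.mk
        (Quot fun a b : {x // x ∈ Gr R T γ h} => a.1 - b.1 ∈ Fact R T γ h) =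
      Cardinal.mk (Submodule.span R (BrSet R T γ res)) := by
  have hcofℵ : Cardinal.aleph0 < γ.cof := lt_of_le_of_lt (le_max_left _ _) hcof
  have hgen := part1 hγ hcofℵ hres hh
  exact ⟨hgen, part2 hγ hh hgen⟩

end Paper644
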